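/- Let H_n^q(x) ∈ ℝ[x] be defined by H_0^q = 1, H_1^q(x) = x and the recurrence x·H_n^q(x) = [n]·H_{n−1}^q(x) + H_{n+1}^q(x) for n ≥ 1. Then for every n ≥ 0 one has H_n^q(x) = x^n + Σ_{k=1}^{⌊n/2⌋} (−1)^k · α_{2k−1;n−1} · x^{n−2k}, and consequently H_n^q(x) = √([n]!)·P_n(x;q). -/
import Mathlib


open Polynomial Filter

/-- The symmetric q-number `[n] = (q^n - q^{-n})/(q - q⁻¹)`. -/
noncomputable def qnum (q : ℝ) (n : ℕ) : ℝ := (q ^ (n : ℤ) - q ^ (-(n : ℤ))) / (q - q⁻¹)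

/-- The q-factorial `[n]! = [1][2]⋯[n]`. -/
noncomputable def qfact (q : ℝ) : ℕ → ℝ
  | 0 => 1
  | n + 1 => qfact q n * qnum q (n + 1)

/-- The even q-double factorial: `evenDF q n = [2n]!! = [2n][2n-2]⋯[2]`. -/
noncomputable def evenDF (q : ℝ) : ℕ → ℝ
  | 0 => 1
  | n + 1 => qnum q (2 * (n + 1)) * evenDF q n

/-- The odd q-double factorial: `oddDF q n = [2n-1]!! = [2n-1][2n-3]⋯[1]`. -/
noncomputable def oddDF (q : ℝ) : ℕ → ℝ
  | 0 => 1
  | n + 1 => qnum q (2 * n + 1) * oddDF q n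

/-- `alphaC q m n = α_{2m-1;n}`, with `α_{-1;n} = 1` and
`α_{2m-1;n} = Σ_{k=2m-1}^{n} [k]·α_{2m-3;k-2}`. -/
noncomputable def alphaC (q : ℝ) : ℕ → ℕ → ℝ
  | 0, _ => 1
  | m + 1, n => ∑ k ∈ Finset.Icc (2 * m + 1) n, qnum q k * alphaC q m (k - 2)

/-- `betaC q m n = β_{2m;n}`, with `β_{0;n} = 1` and
`β_{2m;n} = Σ_{k=2m}^{n} [k]·β_{2m-2;k-2}`. -/
noncomputable def betaC (q : ℝ) : ℕ → ℕ → ℝ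
  | 0, _ => 1
  | m + 1, n => ∑ k ∈ Finset.Icc (2 * m + 2) n, qnum q k * betaC q m (k - 2)

lemma alphaC_eq_zero (q : ℝ) {m n : ℕ} (h : n < 2*m+1) : alphaC q (m+1) n = 0 := by
  rw [alphaC, Finset.Icc_eq_empty (by omega), Finset.sum_empty]

lemma alphaC_succ (q : ℝ) (m n : ℕ) :
    alphaC q (m+1) (n+1) = alphaC q (m+1) n + qnum q (n+1) * alphaC q m (n-1) := by
  rcases le_or_gt (2*m+1) (n+1) with h | h
  · rw [alphaC, alphaC, Finset.sum_Icc_succ_top h]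
    congr 2
  · have h1 : alphaC q (m+1) (n+1) = 0 := alphaC_eq_zero _ (by omega)
    have h2 : alphaC q (m+1) n = 0 := alphaC_eq_zero _ (by omega)
    match m with
    | 0 => omega
    | m'+1 =>
      have h3 : alphaC q (m'+1) (n-1) = 0 := alphaC_eq_zero _ (by omega)
      rw [h1, h2, h3]; ring

/-- The claimed explicit polynomial. -/
noncomputable def Spoly (q : ℝ) (n : ℕ) : Polynomial ℝ :=
  X ^ n + ∑ k ∈ Finset.Icc 1 (n / 2), C ((-1 : ℝ) ^ k * alphaC q k (n - 1)) * X ^ (n - 2 * k)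

lemma Spoly_range (q : ℝ) (n : ℕ) : Spoly q n =
    X ^ n + ∑ i ∈ Finset.range (n/2),
      C ((-1:ℝ)^(i+1) * alphaC q (i+1) (n-1)) * X ^ (n - 2*(i+1)) := by
  unfold Spoly
  congr 1
  rw [← Finset.Ico_add_one_right_eq_Icc, Finset.sum_Ico_eq_sum_range]
  exact Finset.sum_congr rfl fun i _ => by rw [add_comm 1 i]

lemma sum_pad {M : Type*} [AddCommMonoid M] {a b : ℕ} (h : a ≤ b) (f : ℕ → M)
    (hf : ∀ i, a ≤ i → f i = 0) :
    ∑ i ∈ Finset.range a, f i = ∑ i ∈ Finset.range b, f i :=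
  Finset.sum_subset (Finset.range_subset_range.mpr h) (fun i _ hi => hf i (by simpa using hi))

lemma Spoly_rec (q : ℝ) (m : ℕ) :
    Spoly q (m+2) = X * Spoly q (m+1) - qnum q (m+1) • Spoly q m := by
  rw [Spoly_range, Spoly_range, Spoly_range]
  simp only [show m + 2 - 1 = m + 1 by rfl, show m + 1 - 1 = m by rfl,
    show (m+2)/2 = m/2 + 1 by omega]
  rw [sum_pad (show (m+1)/2 ≤ m/2 + 1 by omega)
      (fun i => C ((-1:ℝ)^(i+1) * alphaC q (i+1) m) * X ^ (m+1 - 2*(i+1)))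
      (fun i hi => by simp only [alphaC_eq_zero q (show m < 2*i+1 by omega), mul_zero, map_zero, zero_mul])]
  have hsplit : ∑ i ∈ Finset.range (m/2+1),
      C ((-1:ℝ)^(i+1) * alphaC q (i+1) (m+1)) * X ^ (m + 2 - 2*(i+1))
      = (∑ i ∈ Finset.range (m/2+1),
          C ((-1:ℝ)^(i+1) * alphaC q (i+1) m) * X ^ (m + 2 - 2*(i+1)))
        + ∑ i ∈ Finset.range (m/2+1),
          C ((-1:ℝ)^(i+1) * (qnum q (m+1) * alphaC q i (m-1))) * X ^ (m + 2 - 2*(i+1)) := by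
    rw [← Finset.sum_add_distrib]
    exact Finset.sum_congr rfl fun i _ => by rw [alphaC_succ, mul_add, map_add, add_mul]
  rw [hsplit]
  have hS1 : ∑ i ∈ Finset.range (m/2+1),
      C ((-1:ℝ)^(i+1) * alphaC q (i+1) m) * X ^ (m + 2 - 2*(i+1))
      = X * ∑ i ∈ Finset.range (m/2+1),
          C ((-1:ℝ)^(i+1) * alphaC q (i+1) m) * X ^ (m + 1 - 2*(i+1)) := by
    rw [Finset.mul_sum]
    refine Finset.sum_congr rfl fun i hi => ?_
    by_cases hle : 2*(i+1) ≤ m+1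
    · rw [show m + 2 - 2*(i+1) = (m + 1 - 2*(i+1)) + 1 by omega, pow_succ]; ring
    · rw [alphaC_eq_zero q (show m < 2*i+1 by omega)]
      simp
  have hS2 : ∑ i ∈ Finset.range (m/2+1),
      C ((-1:ℝ)^(i+1) * (qnum q (m+1) * alphaC q i (m-1))) * X ^ (m + 2 - 2*(i+1))
      = -(C (qnum q (m+1)) * X ^ m)
        - C (qnum q (m+1)) * ∑ i ∈ Finset.range (m/2),
            C ((-1:ℝ)^(i+1) * alphaC q (i+1) (m-1)) * X ^ (m - 2*(i+1)) := by
    rw [Finset.sum_range_succ']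
    have h0 : C ((-1:ℝ)^(0+1) * (qnum q (m+1) * alphaC q 0 (m-1))) * X ^ (m + 2 - 2*(0+1))
        = -(C (qnum q (m+1)) * X ^ m) := by
      rw [show m + 2 - 2*(0+1) = m by omega]
      show C ((-1:ℝ)^1 * (qnum q (m+1) * 1)) * X ^ m = _
      rw [show ((-1:ℝ))^1 * (qnum q (m+1) * 1) = -(qnum q (m+1)) by ring, map_neg]
      ring
    rw [h0, Finset.mul_sum]
    have hterm : ∀ i ∈ Finset.range (m/2),
        C ((-1:ℝ)^(i+1+1) * (qnum q (m+1) * alphaC q (i+1) (m-1))) * X ^ (m + 2 - 2*(i+1+1))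
        = -(C (qnum q (m+1)) * (C ((-1:ℝ)^(i+1) * alphaC q (i+1) (m-1)) * X ^ (m - 2*(i+1)))) := by
      intro i _
      rw [show m + 2 - 2*(i+1+1) = m - 2*(i+1) by omega,
        show ((-1:ℝ))^(i+1+1) * (qnum q (m+1) * alphaC q (i+1) (m-1))
          = -(qnum q (m+1) * ((-1:ℝ)^(i+1) * alphaC q (i+1) (m-1))) by ring,
        map_neg, map_mul]
      ring
    rw [Finset.sum_congr rfl hterm]
    rw [Finset.sum_neg_distrib]
    ring
  rw [hS1, hS2, Polynomial.smul_eq_C_mul]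
  ring

lemma qden_ne {q : ℝ} (hq : 0 < q) (hq1 : q ≠ 1) : q - q⁻¹ ≠ 0 := by
  intro h
  have hqne : q ≠ 0 := ne_of_gt hq
  have hsq : q * q = 1 := by
    have h' : q = q⁻¹ := sub_eq_zero.mp h
    nth_rewrite 2 [h']
    exact mul_inv_cancel₀ hqne
  have h2 : (q - 1) * (q + 1) = 0 := by nlinarith
  rcases mul_eq_zero.mp h2 with h3 | h3
  · exact hq1 (by linarith)
  · linarith

lemma qnum_pos {q : ℝ} (hq : 0 < q) (hq1 : q ≠ 1) {n : ℕ} (hn : 1 ≤ n) : 0 < qnum q n := by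
  unfold qnum
  have hlt : (-(n:ℤ)) < (n:ℤ) := by omega
  rcases hq1.lt_or_gt with h | h
  · apply div_pos_of_neg_of_neg
    · have := zpow_lt_zpow_right_of_lt_one₀ hq h hlt
      linarith
    · have : 1 < q⁻¹ := (one_lt_inv₀ hq).mpr h
      linarith
  · apply div_pos
    · have := zpow_lt_zpow_right₀ h hlt
      linarith
    · have : q⁻¹ < 1 := (inv_lt_one₀ hq).mpr h
      linarith

lemma qnum_one {q : ℝ} (hq : 0 < q) (hq1 : q ≠ 1) : qnum q 1 = 1 := by
  unfold qnum
  rw [show ((1:ℕ):ℤ) = 1 by norm_num, zpow_one, zpow_neg_one]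
  exact div_self (qden_ne hq hq1)

lemma qfact_pos {q : ℝ} (hq : 0 < q) (hq1 : q ≠ 1) (n : ℕ) : 0 < qfact q n := by
  induction n with
  | zero => norm_num [qfact]
  | succ k ih =>
    rw [qfact]
    exact mul_pos ih (qnum_pos hq hq1 (by omega))

/-- with `H_0 = 1`, `H_1 = x` and `x·H_n = [n]·H_{n-1} + H_{n+1}` for `n ≥ 1`,
one has `H_n(x) = x^n + Σ_{k=1}^{⌊n/2⌋} (−1)^k·α_{2k-1;n-1}·x^{n-2k}` and
consequently `H_n = √([n]!)·P_n`. -/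
theorem stmt19 (q : ℝ) (hq : 0 < q) (hq1 : q ≠ 1)
    (H P : ℕ → Polynomial ℝ)
    (hH0 : H 0 = 1) (hH1 : H 1 = X)
    (hHrec : ∀ n : ℕ, 1 ≤ n → X * H n = qnum q n • H (n - 1) + H (n + 1))
    (hP0 : P 0 = 1) (hP1 : P 1 = X)
    (hPrec : ∀ n : ℕ, 1 ≤ n →
      Real.sqrt (qnum q n) • P (n - 1) + Real.sqrt (qnum q (n + 1)) • P (n + 1) = X * P n)
    (n : ℕ) :
    (H n = X ^ n + ∑ k ∈ Finset.Icc 1 (n / 2),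
        C ((-1 : ℝ) ^ k * alphaC q k (n - 1)) * X ^ (n - 2 * k)) ∧
    H n = Real.sqrt (qfact q n) • P n := by
  -- the rewritten recurrence for H
  have hHrec' : ∀ k : ℕ, H (k+2) = X * H (k+1) - qnum q (k+1) • H k := by
    intro k
    have hr := hHrec (k+1) (by omega)
    simp only [Nat.add_sub_cancel] at hr
    rw [hr]; abel
  -- Part 1 : H n = Spoly q n
  have key1 : ∀ m : ℕ, H m = Spoly q m ∧ H (m+1) = Spoly q (m+1) := by
    intro m
    induction m with
    | zero =>
      constructor
      · rw [hH0]; unfold Spoly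
        rw [show (0:ℕ)/2 = 0 by norm_num, Finset.Icc_eq_empty (by norm_num), Finset.sum_empty]
        simp
      · rw [hH1]; unfold Spoly
        rw [show (1:ℕ)/2 = 0 by norm_num, Finset.Icc_eq_empty (by norm_num), Finset.sum_empty]
        simp
    | succ k ih =>
      refine ⟨ih.2, ?_⟩
      rw [hHrec' k, ih.1, ih.2]
      exact (Spoly_rec q k).symm
  -- Part 2 : H n = sqrt (qfact q n) • P n
  set K : ℕ → Polynomial ℝ := fun m => Real.sqrt (qfact q m) • P m with hK
  have hK0 : K 0 = 1 := by
    simp [hK, qfact, hP0]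
  have hK1 : K 1 = X := by
    simp [hK, qfact, qnum_one hq hq1, hP1]
  have hKrec' : ∀ k : ℕ, K (k+2) = X * K (k+1) - qnum q (k+1) • K k := by
    intro k
    have hr := hPrec (k+1) (by omega)
    simp only [Nat.add_sub_cancel] at hr
    -- hr : √[k+1] • P k + √[k+2] • P (k+2) = X * P (k+1)
    have hfq : 0 ≤ qfact q (k+1) := (qfact_pos hq hq1 (k+1)).le
    have hfq0 : 0 ≤ qfact q k := (qfact_pos hq hq1 k).le
    have hq1' : 0 ≤ qnum q (k+1) := (qnum_pos hq hq1 (by omega : 1 ≤ k+1)).le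
    have hq2' : 0 ≤ qnum q (k+2) := (qnum_pos hq hq1 (by omega : 1 ≤ k+2)).le
    have e1 : Real.sqrt (qfact q (k+1)) * Real.sqrt (qnum q (k+1))
        = qnum q (k+1) * Real.sqrt (qfact q k) := by
      rw [show qfact q (k+1) = qfact q k * qnum q (k+1) from rfl,
        Real.sqrt_mul hfq0, mul_assoc, Real.mul_self_sqrt hq1']
      ring
    have e2 : Real.sqrt (qfact q (k+1)) * Real.sqrt (qnum q (k+2))
        = Real.sqrt (qfact q (k+2)) := by
      rw [show qfact q (k+2) = qfact q (k+1) * qnum q (k+2) from rfl,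
        Real.sqrt_mul hfq]
    have : X * K (k+1) = Real.sqrt (qfact q (k+1)) •
        (Real.sqrt (qnum q (k+1)) • P k + Real.sqrt (qnum q (k+2)) • P (k+2)) := by
      rw [hr, hK]
      simp only [mul_smul_comm]
    rw [this, smul_add, smul_smul, smul_smul, e1, e2, hK]
    simp only [mul_smul]
    abel
  have key2 : ∀ m : ℕ, H m = K m ∧ H (m+1) = K (m+1) := by
    intro m
    induction m with
    | zero => exact ⟨by rw [hH0, hK0], by rw [hH1, hK1]⟩
    | succ k ih =>
      refine ⟨ih.2, ?_⟩
      rw [hHrec' k, ih.1, ih.2, hKrec' k]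
  exact ⟨(key1 n).1, (key2 n).1⟩
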